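/- arXiv:2005.14336 — 2 statements merged into one kernel-verified Lean document; each statement's English description precedes it below -/
import Mathlib

section
/- Let Σ be a 2-chromatic signed simple graph (χ(Σ) = 2). Then M(Σ) = m(Σ) = 1 if and only if Σ is connected and every edge of Σ is negative. -/
/-- A signed simple graph: two edge-disjoint simple graphs on the same vertex set,
the positive edges and the negative edges. -/
structure SignedGraph (V : Type*) where
  pos : SimpleGraph V
  neg : SimpleGraph V
  disjoint : ∀ a b : V, ¬ (pos.Adj a b ∧ neg.Adj a b)

/-- The color set of size `n`: `{±1, …, ±k}` if `n = 2k`, and `{0, ±1, …, ±k}` if `n = 2k+1`. -/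
noncomputable def signedColorSet (n : ℕ) : Finset ℤ :=
  if Even n then (Finset.Icc (-((n / 2 : ℕ) : ℤ)) ((n / 2 : ℕ) : ℤ)).erase 0
  else Finset.Icc (-((n / 2 : ℕ) : ℤ)) ((n / 2 : ℕ) : ℤ)

/-- A proper coloration of a signed graph using the color set of size `n`. -/
def IsProperColoration {V : Type*} (S : SignedGraph V) (n : ℕ) (κ : V → ℤ) : Prop :=
  (∀ v, κ v ∈ signedColorSet n) ∧
  (∀ a b, S.pos.Adj a b → κ a ≠ κ b) ∧
  (∀ a b, S.neg.Adj a b → κ a ≠ -κ b)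

/-- The chromatic number: the least size of a color set admitting a proper coloration. -/
noncomputable def sChromaticNumber {V : Type*} (S : SignedGraph V) : ℕ :=
  sInf {n : ℕ | ∃ κ : V → ℤ, IsProperColoration S n κ}

/-- A minimal coloration: a proper coloration using the color set of size `χ(Σ)`. -/
def IsMinimalColoration {V : Type*} (S : SignedGraph V) (κ : V → ℤ) : Prop :=
  IsProperColoration S (sChromaticNumber S) κ

/-- The deficiency of a coloration: the number of unused colors from the color set of size `n`. -/
noncomputable def sDeficiency {V : Type*} [Fintype V] (n : ℕ) (κ : V → ℤ) : ℕ :=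
  (signedColorSet n \ Finset.image κ Finset.univ).card

/-- Maximum deficiency over minimal colorations. -/
noncomputable def maxDef {V : Type*} [Fintype V] (S : SignedGraph V) : ℕ :=
  sSup {d : ℕ | ∃ κ : V → ℤ, IsMinimalColoration S κ ∧ sDeficiency (sChromaticNumber S) κ = d}

/-- Minimum deficiency over minimal colorations. -/
noncomputable def minDef {V : Type*} [Fintype V] (S : SignedGraph V) : ℕ :=
  sInf {d : ℕ | ∃ κ : V → ℤ, IsMinimalColoration S κ ∧ sDeficiency (sChromaticNumber S) κ = d}

/-- A stable cover of the positive edges: a vertex cover of `E⁺` that is stable in `Σ`. -/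
def IsStableCover {V : Type*} (S : SignedGraph V) (T : Set V) : Prop :=
  (∀ a b, S.pos.Adj a b → a ∈ T ∨ b ∈ T) ∧
  (∀ a ∈ T, ∀ b ∈ T, ¬ S.pos.Adj a b ∧ ¬ S.neg.Adj a b)

/-- An edge `ab` has exactly one endpoint in `A`. -/
def crossing {V : Type*} (A : Set V) (a b : V) : Prop := ¬ ((a ∈ A) ↔ (b ∈ A))

/-- Switching a signed graph at a vertex set `A`: the sign of every edge with exactly one
endpoint in `A` is negated. -/
def SignedGraph.switch {V : Type*} (S : SignedGraph V) (A : Set V) : SignedGraph V where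
  pos :=
    { Adj := fun a b => (S.pos.Adj a b ∧ ¬ crossing A a b) ∨ (S.neg.Adj a b ∧ crossing A a b)
      symm := by
        constructor
        intro a b h
        unfold crossing at *
        rcases h with ⟨h1, h2⟩ | ⟨h1, h2⟩
        · exact Or.inl ⟨S.pos.symm.symm _ _ h1, by tauto⟩
        · exact Or.inr ⟨S.neg.symm.symm _ _ h1, by tauto⟩
      loopless := by
        constructor
        intro a h
        rcases h with ⟨h1, _⟩ | ⟨_, h2⟩
        · exact S.pos.loopless.irrefl a h1
        · exact h2 Iff.rfl }
  neg :=
    { Adj := fun a b => (S.neg.Adj a b ∧ ¬ crossing A a b) ∨ (S.pos.Adj a b ∧ crossing A a b)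
      symm := by
        constructor
        intro a b h
        unfold crossing at *
        rcases h with ⟨h1, h2⟩ | ⟨h1, h2⟩
        · exact Or.inl ⟨S.neg.symm.symm _ _ h1, by tauto⟩
        · exact Or.inr ⟨S.pos.symm.symm _ _ h1, by tauto⟩
      loopless := by
        constructor
        intro a h
        rcases h with ⟨h1, _⟩ | ⟨_, h2⟩
        · exact S.neg.loopless.irrefl a h1
        · exact h2 Iff.rfl }
  disjoint := by
    intro a b h
    have := S.disjoint a b
    tauto

/-- General proper coloration with an arbitrary color set `C ⊆ ℤ`. -/
def IsProperWith {V : Type*} (S : SignedGraph V) (C : Set ℤ) (κ : V → ℤ) : Prop :=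
  (∀ v, κ v ∈ C) ∧
  (∀ a b, S.pos.Adj a b → κ a ≠ κ b) ∧
  (∀ a b, S.neg.Adj a b → κ a ≠ -κ b)

open Classical in
/-- The coloration switching equivalent to `κ` via `A`: negate the colors on `A`. -/
noncomputable def switchColor {V : Type*} (A : Set V) (κ : V → ℤ) : V → ℤ :=
  fun v => if v ∈ A then -κ v else κ v

/-- The adjacency of the forcing graph `F(Σ)` for the matching `m`:
a directed edge from `x` to `y` whenever `x ȳ` is a negative edge. -/
def ForcingAdj {V : Type*} (S : SignedGraph V) (m : V → V) (x y : V) : Prop :=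
  S.neg.Adj x (m y)

/-!
With the two colours `±1`, a proper colouring must separate the ends of every positive edge and
give both ends of every negative edge the same colour. Hence a minimal colouring has deficiency
`0` or `1`, and `1` exactly when it is constant, so `M(Σ) = m(Σ) = 1` says that every minimal
colouring is constant. A constant proper colouring leaves no room for positive edges; once all
edges are negative, the proper colourings are the `±1`-valued functions constant on connected
components, and these are all constant iff `Σ` is connected.
-/

-- `a ≠ 0` rules out the junk values `sSup s = 0` for unbounded `s` and `sInf ∅ = 0`.
theorem Nat.sSup_eq_and_sInf_eq_iff_eq_singleton {s : Set ℕ} {a : ℕ} (ha : a ≠ 0) :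
    sSup s = a ∧ sInf s = a ↔ s = {a} := by
  constructor
  · rintro ⟨hsup, hinf⟩
    have hne : s.Nonempty := Nat.nonempty_of_pos_sInf (hinf ▸ Nat.pos_of_ne_zero ha)
    have hbdd : BddAbove s := by
      by_contra hs
      exact ha (hsup ▸ Nat.sSup_of_not_bddAbove hs)
    refine Set.eq_singleton_iff_nonempty_unique_mem.2 ⟨hne, fun x hx => le_antisymm ?_ ?_⟩
    · exact hsup ▸ le_csSup hbdd hx
    · exact hinf ▸ Nat.sInf_le hx
  · rintro rfl
    exact ⟨csSup_singleton a, csInf_singleton a⟩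

theorem signedColorSet_two : signedColorSet 2 = {-1, 1} := by decide

theorem mem_signedColorSet_two {x : ℤ} : x ∈ signedColorSet 2 ↔ x = -1 ∨ x = 1 := by
  simp [signedColorSet_two]

section

variable {V : Type*} {S : SignedGraph V}

theorem SignedGraph.nonempty_of_sChromaticNumber_ne_zero (h : sChromaticNumber S ≠ 0) :
    Nonempty V := by
  by_contra hV
  rw [not_nonempty_iff] at hV
  exact h (Nat.eq_zero_of_le_zero (Nat.sInf_le ⟨0, isEmptyElim, isEmptyElim, isEmptyElim⟩))

theorem SignedGraph.exists_isMinimalColoration (h : sChromaticNumber S ≠ 0) :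
    ∃ κ, IsMinimalColoration S κ :=
  Nat.sInf_mem (Nat.nonempty_of_pos_sInf (Nat.pos_of_ne_zero h))

theorem IsProperColoration.eq_of_neg_adj {κ : V → ℤ} (hκ : IsProperColoration S 2 κ)
    {a b : V} (hab : S.neg.Adj a b) : κ a = κ b := by
  have hne := hκ.2.2 a b hab
  rcases mem_signedColorSet_two.1 (hκ.1 a) with ha | ha <;>
    rcases mem_signedColorSet_two.1 (hκ.1 b) with hb | hb <;> omega

theorem IsProperColoration.eq_of_reachable (hpos : S.pos = ⊥) {κ : V → ℤ}
    (hκ : IsProperColoration S 2 κ) {u v : V} (huv : (S.pos ⊔ S.neg).Reachable u v) :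
    κ u = κ v := by
  rw [hpos, bot_sup_eq, SimpleGraph.reachable_iff_reflTransGen] at huv
  induction huv with
  | refl => rfl
  | tail _ hbc ih => exact ih.trans (hκ.eq_of_neg_adj hbc)

open Classical in
theorem isProperColoration_two_ite_connectedComponentMk_eq (hpos : S.pos = ⊥)
    (c : (S.pos ⊔ S.neg).ConnectedComponent) :
    IsProperColoration S 2
      fun v => if (S.pos ⊔ S.neg).connectedComponentMk v = c then 1 else -1 := by
  refine ⟨fun v => ?_, fun a b hab => by simp [hpos] at hab, fun a b hab => ?_⟩
  · dsimp only
    rw [mem_signedColorSet_two]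
    split_ifs <;> simp only [true_or, or_true]
  · have hcomp :
        (S.pos ⊔ S.neg).connectedComponentMk a = (S.pos ⊔ S.neg).connectedComponentMk b :=
      SimpleGraph.ConnectedComponent.connectedComponentMk_eq_of_adj (Or.inr hab)
    simp only [hcomp]
    split_ifs <;> norm_num

theorem forall_isProperColoration_two_const_iff [Nonempty V] {κ₀ : V → ℤ}
    (hκ₀ : IsProperColoration S 2 κ₀) :
    (∀ κ, IsProperColoration S 2 κ → ∃ c, ∀ v, κ v = c) ↔
      (S.pos ⊔ S.neg).Connected ∧ S.pos = ⊥ := by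
  constructor
  · intro hconst
    obtain ⟨c₀, hc₀⟩ := hconst κ₀ hκ₀
    have hpos : S.pos = ⊥ := by
      ext a b
      simpa using fun hab => hκ₀.2.1 a b hab (by rw [hc₀ a, hc₀ b])
    refine ⟨⟨fun u v => ?_⟩, hpos⟩
    obtain ⟨c, hc⟩ := hconst _ (isProperColoration_two_ite_connectedComponentMk_eq hpos
      ((S.pos ⊔ S.neg).connectedComponentMk u))
    have huv := (hc v).trans (hc u).symm
    rw [if_pos rfl] at huv
    split_ifs at huv with hvu
    exact SimpleGraph.ConnectedComponent.exact hvu.symm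
  · rintro ⟨hconn, hpos⟩ κ hκ
    obtain ⟨v₀⟩ := hconn.nonempty
    exact ⟨κ v₀, fun v => hκ.eq_of_reachable hpos (hconn.preconnected v v₀)⟩

theorem sDeficiency_two_eq_one_iff [Fintype V] [Nonempty V] {κ : V → ℤ}
    (hκ : ∀ v, κ v ∈ signedColorSet 2) :
    sDeficiency 2 κ = 1 ↔ ∃ c, ∀ v, κ v = c := by
  have him : Finset.univ.image κ ⊆ signedColorSet 2 := by
    simpa [Finset.subset_iff] using hκ
  have hle : (Finset.univ.image κ).card ≤ 2 := by
    simpa [signedColorSet_two] using Finset.card_le_card him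
  have hpos : 0 < (Finset.univ.image κ).card := (Finset.univ_nonempty.image κ).card_pos
  have hcard : sDeficiency 2 κ = 1 ↔ (Finset.univ.image κ).card = 1 := by
    rw [sDeficiency, Finset.card_sdiff_of_subset him, signedColorSet_two,
      Finset.card_pair (by norm_num)]
    omega
  rw [hcard, Finset.card_eq_one]
  simp only [← Finset.coe_inj, Finset.coe_image, Finset.coe_univ, Set.image_univ,
    Finset.coe_singleton, Set.range_eq_singleton_iff]

end

/-- For a 2-chromatic signed simple graph,
`M(Σ) = m(Σ) = 1` iff `Σ` is connected and all edges are negative. -/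
theorem two_chromatic_def_one {V : Type*} [Fintype V] (S : SignedGraph V)
    (h : sChromaticNumber S = 2) :
    (maxDef S = 1 ∧ minDef S = 1) ↔ ((S.pos ⊔ S.neg).Connected ∧ S.pos = ⊥) := by
  have : Nonempty V := S.nonempty_of_sChromaticNumber_ne_zero (by omega)
  obtain ⟨κ₀, hκ₀⟩ := S.exists_isMinimalColoration (by omega)
  rw [IsMinimalColoration, h] at hκ₀
  rw [← forall_isProperColoration_two_const_iff hκ₀, maxDef, minDef,
    Nat.sSup_eq_and_sInf_eq_iff_eq_singleton one_ne_zero,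
    Set.eq_singleton_iff_nonempty_unique_mem]
  simp only [IsMinimalColoration, h]
  constructor
  · rintro ⟨-, hdef⟩ κ hκ
    exact (sDeficiency_two_eq_one_iff hκ.1).1 (hdef _ ⟨κ, hκ, rfl⟩)
  · intro hconst
    refine ⟨⟨_, κ₀, hκ₀, rfl⟩, ?_⟩
    rintro _ ⟨κ, hκ, rfl⟩
    exact (sDeficiency_two_eq_one_iff hκ.1).2 (hconst κ hκ)
end

section
/- Let Σ be a signed simple graph with odd chromatic number χ(Σ) = 2k+1, let κ be a minimal proper coloration of Σ, and suppose the color i of the color set {0, ±1,…,±k} is not used by κ. Then i ≠ 0 and at least two vertices of Σ are colored −i. -/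
/-! The vertices colored `0` form a stable set (empty if `i = 0`). Moving all of them to the
unused color `i` can only clash, along a negative edge, with a vertex colored `-i`; if there is
at most one such vertex `b`, the zero-colored negative neighbours of `b` go to `-i` instead,
which is safe because they are not also positive neighbours of `b`. This removes the color `0`,
so a `2k`-coloring results, contradicting `χ(Σ) = 2k + 1`. -/

lemma sChromaticNumber_le {V : Type*} {S : SignedGraph V} {n : ℕ} {κ : V → ℤ}
    (h : IsProperColoration S n κ) : sChromaticNumber S ≤ n :=
  Nat.sInf_le ⟨κ, h⟩

lemma isProperColoration_iff_isProperWith {V : Type*} {S : SignedGraph V} {n : ℕ}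
    {κ : V → ℤ} : IsProperColoration S n κ ↔ IsProperWith S (signedColorSet n) κ :=
  Iff.rfl

lemma coe_signedColorSet_odd_diff_zero (k : ℕ) :
    (signedColorSet (2 * k + 1) : Set ℤ) \ {0} = signedColorSet (2 * k) := by
  have hodd : ¬ Even (2 * k + 1) := Nat.not_even_iff_odd.mpr (odd_two_mul_add_one k)
  have hhalf : (2 * k + 1) / 2 = 2 * k / 2 := by omega
  rw [← Finset.coe_erase]
  simp [signedColorSet, hodd, hhalf]

open Classical in
noncomputable def recolorZeros {V : Type*} (S : SignedGraph V) (κ : V → ℤ) (i : ℤ) :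
    V → ℤ := fun v =>
  if κ v ≠ 0 then κ v else if ∃ b, κ b = -i ∧ S.neg.Adj v b then -i else i

section recolorZeros

variable {V : Type*} {S : SignedGraph V} {κ : V → ℤ} {i : ℤ} {v : V}

lemma recolorZeros_of_ne_zero (hv : κ v ≠ 0) : recolorZeros S κ i v = κ v :=
  if_pos hv

lemma recolorZeros_of_neg_adj (hv : κ v = 0) (h : ∃ b, κ b = -i ∧ S.neg.Adj v b) :
    recolorZeros S κ i v = -i := by
  simp [recolorZeros, hv, h]

lemma recolorZeros_of_not_neg_adj (hv : κ v = 0) (h : ¬ ∃ b, κ b = -i ∧ S.neg.Adj v b) :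
    recolorZeros S κ i v = i := by
  simp only [recolorZeros, hv, ne_eq, not_true_eq_false, if_false, h]

lemma recolorZeros_ne_of_pos_adj (hiu : ∀ v, κ v ≠ i)
    (huniq : ∀ a b, κ a = -i → κ b = -i → a = b) {a b : V} (hab : S.pos.Adj a b)
    (ha : κ a = 0) : recolorZeros S κ i a ≠ κ b := by
  by_cases h : ∃ c, κ c = -i ∧ S.neg.Adj a c
  · obtain ⟨c, hc, hac⟩ := h
    rw [recolorZeros_of_neg_adj ha ⟨c, hc, hac⟩]
    intro hb
    exact S.disjoint a b ⟨hab, huniq c b hc hb.symm ▸ hac⟩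
  · rw [recolorZeros_of_not_neg_adj ha h]
    exact fun hb => hiu b hb.symm

lemma recolorZeros_ne_neg_of_neg_adj (hiu : ∀ v, κ v ≠ i) {a b : V} (hab : S.neg.Adj a b)
    (ha : κ a = 0) : recolorZeros S κ i a ≠ -κ b := by
  by_cases h : ∃ c, κ c = -i ∧ S.neg.Adj a c
  · rw [recolorZeros_of_neg_adj ha h]
    exact fun hb => hiu b (neg_inj.mp hb).symm
  · rw [recolorZeros_of_not_neg_adj ha h]
    exact fun hb => h ⟨b, by omega, hab⟩

end recolorZeros

lemma IsProperWith.recolorZeros {V : Type*} {S : SignedGraph V} {C : Set ℤ} {κ : V → ℤ}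
    {i : ℤ} (hκ : IsProperWith S C κ) (hi : i ∈ C) (hiu : ∀ v, κ v ≠ i)
    (huniq : ∀ a b, κ a = -i → κ b = -i → a = b) :
    IsProperWith S (C \ {0}) (recolorZeros S κ i) := by
  obtain ⟨hmem, hpos, hneg⟩ := hκ
  refine ⟨fun v => ?_, fun a b hab => ?_, fun a b hab => ?_⟩
  · by_cases hv : κ v = 0
    · by_cases h : ∃ b, κ b = -i ∧ S.neg.Adj v b
      · rw [recolorZeros_of_neg_adj hv h]
        obtain ⟨b, hb, -⟩ := h
        exact ⟨hb ▸ hmem b, fun h0 => hiu v (by simp_all)⟩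
      · rw [recolorZeros_of_not_neg_adj hv h]
        exact ⟨hi, fun h0 => hiu v (by simp_all)⟩
    · rw [recolorZeros_of_ne_zero hv]
      exact ⟨hmem v, hv⟩
  · rcases ne_or_eq (κ a) 0 with ha | ha <;> rcases ne_or_eq (κ b) 0 with hb | hb
    · rw [recolorZeros_of_ne_zero ha, recolorZeros_of_ne_zero hb]
      exact hpos a b hab
    · rw [recolorZeros_of_ne_zero ha]
      exact (recolorZeros_ne_of_pos_adj hiu huniq hab.symm hb).symm
    · rw [recolorZeros_of_ne_zero hb]
      exact recolorZeros_ne_of_pos_adj hiu huniq hab ha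
    · exact absurd (ha.trans hb.symm) (hpos a b hab)
  · rcases ne_or_eq (κ a) 0 with ha | ha <;> rcases ne_or_eq (κ b) 0 with hb | hb
    · rw [recolorZeros_of_ne_zero ha, recolorZeros_of_ne_zero hb]
      exact hneg a b hab
    · rw [recolorZeros_of_ne_zero ha]
      have := recolorZeros_ne_neg_of_neg_adj hiu hab.symm hb
      omega
    · rw [recolorZeros_of_ne_zero hb]
      exact recolorZeros_ne_neg_of_neg_adj hiu hab ha
    · exact absurd (by rw [ha, hb, neg_zero]) (hneg a b hab)

theorem unused_color_odd_general {V : Type*} (S : SignedGraph V) (k : ℕ)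
    (h : sChromaticNumber S = 2 * k + 1)
    (κ : V → ℤ) (hκ : IsMinimalColoration S κ)
    (i : ℤ) (hi : i ∈ signedColorSet (2 * k + 1)) (hiu : ∀ v, κ v ≠ i) :
    i ≠ 0 ∧ ∃ a b : V, a ≠ b ∧ κ a = -i ∧ κ b = -i := by
  by_contra hcon
  have huniq : ∀ a b, κ a = -i → κ b = -i → a = b := by
    intro a b ha hb
    by_contra hab
    rcases eq_or_ne i 0 with rfl | hi0
    · exact hiu a (by simpa using ha)
    · exact hcon ⟨hi0, a, b, hab, ha, hb⟩
  rw [IsMinimalColoration, h, isProperColoration_iff_isProperWith] at hκ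
  have h2k := hκ.recolorZeros hi hiu huniq
  rw [coe_signedColorSet_odd_diff_zero, ← isProperColoration_iff_isProperWith] at h2k
  have := sChromaticNumber_le h2k
  omega

/-- If `χ(Σ) = 2k + 1`, `κ` is a minimal coloration, and the color `i` of
the color set is unused, then `i ≠ 0` and at least two vertices are colored `-i`. -/
theorem unused_color_odd {V : Type*} [Fintype V] (S : SignedGraph V) (k : ℕ)
    (h : sChromaticNumber S = 2 * k + 1)
    (κ : V → ℤ) (hκ : IsMinimalColoration S κ)
    (i : ℤ) (hi : i ∈ signedColorSet (2 * k + 1)) (hiu : ∀ v, κ v ≠ i) :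
    i ≠ 0 ∧ ∃ a b : V, a ≠ b ∧ κ a = -i ∧ κ b = -i :=
  unused_color_odd_general S k h κ hκ i hi hiu
end
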